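/- Let m and Q be real numbers with 0 < Q^2 < m^2, set r₊ = m + √(m² − Q²), r₋ = m − √(m² − Q²), and define F(r) = 2m·arccos((r₊ − r)/(r₊ − r₋)) − √((r₊ − r)(r − r₋)) for r ∈ [r₋, r₊]. Then F is continuous and strictly increasing on [r₋, r₊], and F maps [r₋, r₊] bijectively onto [0, mπ]; in particular F restricted to (r₋, r₊) has a well-defined inverse function F⁻¹ : (0, mπ) → (r₋, r₊). -/

import Mathlib

set_option maxHeartbeats 1000000



private lemma rn_key_ineq (m s t A B : ℝ) (hm : 0 < m) (hs0 : 0 < s) (hsm : s < m)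
    (ht1 : -s < t) (ht2 : t < s) (hApos : 0 < A) (hBpos : 0 < B)
    (hA2 : A ^ 2 = (s - t) * (3 * s + t) / (4 * s ^ 2))
    (hB2 : B ^ 2 = (s + t) * (s - t)) :
    t * (s * A) < m * B := by
  have hst : 0 < s + t := by linarith
  have hst' : 0 < s - t := by linarith
  rcases le_or_gt t 0 with ht0 | ht0
  · have h1 : t * (s * A) ≤ 0 := mul_nonpos_of_nonpos_of_nonneg ht0 (by positivity)
    have h2 : 0 < m * B := by positivity
    linarith
  · have hsq : (t * (s * A)) ^ 2 < (m * B) ^ 2 := by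
      have e1 : (t * (s * A)) ^ 2 = t ^ 2 * s ^ 2 * A ^ 2 := by ring
      have e2 : (m * B) ^ 2 = m ^ 2 * B ^ 2 := by ring
      rw [e1, e2, hA2, hB2]
      have hs0' : s ≠ 0 := ne_of_gt hs0
      have expand : t ^ 2 * s ^ 2 * ((s - t) * (3 * s + t) / (4 * s ^ 2))
          = t ^ 2 * (s - t) * (3 * s + t) / 4 := by
        field_simp
      rw [expand]
      have hmt : t < m := lt_trans ht2 hsm
      have hm2t2 : 0 < m ^ 2 - t ^ 2 := by
        have := sq_lt_sq' (by linarith : -m < t) hmt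
        linarith
      have inner : t ^ 2 * (3 * s + t) < 4 * m ^ 2 * (s + t) := by
        linarith [mul_pos hs0 hm2t2, mul_pos ht0 hm2t2,
          mul_pos (mul_pos hm hm) hs0, mul_pos (mul_pos hm hm) ht0]
      have hfin : 0 < (s - t) * (4 * m ^ 2 * (s + t) - t ^ 2 * (3 * s + t)) :=
        mul_pos hst' (sub_pos.2 inner)
      linarith [hfin]
    have h1 : 0 ≤ m * B := by positivity
    exact lt_of_pow_lt_pow_left₀ 2 h1 hsq

/-- For a nonextremal Reissner–Nordström black hole with mass `m > 0`
and charge `Q` satisfying `0 < Q² < m²`, with horizons `r₊ = m + √(m² − Q²)` and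
`r₋ = m − √(m² − Q²)`, the coordinate function
`F(r) = 2m·arccos((r₊ − r)/(r₊ − r₋)) − √((r₊ − r)(r − r₋))` is continuous and strictly
increasing on `[r₋, r₊]`, and maps `[r₋, r₊]` bijectively onto `[0, mπ]`; in particular
`F` restricted to `(r₋, r₊)` maps it bijectively onto `(0, mπ)`, so the inverse
`F⁻¹ : (0, mπ) → (r₋, r₊)` is well defined. -/
theorem reissner_nordstrom_F_bijective (m Q : ℝ) (hm : 0 < m)
    (hQ : 0 < Q ^ 2) (hQm : Q ^ 2 < m ^ 2)
    (rp rm : ℝ)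
    (hrp : rp = m + Real.sqrt (m ^ 2 - Q ^ 2))
    (hrm : rm = m - Real.sqrt (m ^ 2 - Q ^ 2))
    (F : ℝ → ℝ)
    (hF : ∀ r, F r = 2 * m * Real.arccos ((rp - r) / (rp - rm))
        - Real.sqrt ((rp - r) * (r - rm))) :
    ContinuousOn F (Set.Icc rm rp) ∧
    StrictMonoOn F (Set.Icc rm rp) ∧
    Set.BijOn F (Set.Icc rm rp) (Set.Icc 0 (m * Real.pi)) ∧
    Set.BijOn F (Set.Ioo rm rp) (Set.Ioo 0 (m * Real.pi)) := by
  have hs2 : (0:ℝ) < m ^ 2 - Q ^ 2 := by linarith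
  set s := Real.sqrt (m ^ 2 - Q ^ 2) with hsdef
  have hs0 : 0 < s := Real.sqrt_pos.2 hs2
  have hss : s ^ 2 = m ^ 2 - Q ^ 2 := Real.sq_sqrt hs2.le
  have hsm : s < m := by
    rw [hsdef]
    have h := Real.sqrt_lt_sqrt (by linarith : (0:ℝ) ≤ m ^ 2 - Q ^ 2)
      (by linarith : m ^ 2 - Q ^ 2 < m ^ 2)
    rwa [Real.sqrt_sq hm.le] at h
  have hd : rp - rm = 2 * s := by rw [hrp, hrm]; ring
  have hlt : rm < rp := by rw [hrp, hrm]; linarith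
  have hdne : rp - rm ≠ 0 := by rw [hd]; positivity
  have hFeq : F = fun r => 2 * m * Real.arccos ((rp - r) / (rp - rm))
      - Real.sqrt ((rp - r) * (r - rm)) := funext hF
  -- continuity
  have hcont : ContinuousOn F (Set.Icc rm rp) := by
    rw [hFeq]
    apply ContinuousOn.sub
    · exact (continuousOn_const.mul ((Real.continuous_arccos.comp
        (by continuity)).continuousOn))
    · exact (Real.continuous_sqrt.comp (by continuity)).continuousOn
  -- endpoint values
  have Frm : F rm = 0 := by
    rw [hF]
    rw [div_self hdne, Real.arccos_one]
    simp
  have Frp : F rp = m * Real.pi := by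
    rw [hF]
    simp [Real.arccos_zero]
    ring
  -- strict monotonicity via derivative
  have hmono : StrictMonoOn F (Set.Icc rm rp) := by
    apply strictMonoOn_of_deriv_pos (convex_Icc rm rp) hcont
    intro x hx
    rw [interior_Icc] at hx
    obtain ⟨hx1, hx2⟩ := hx
    set t := m - x with htdef
    have hrpx : rp - x = s + t := by rw [hrp]; ring
    have hxrm : x - rm = s - t := by rw [hrm]; ring
    have ht1 : -s < t := by
      have := hx2; rw [hrp] at this; simp only [htdef]; linarith
    have ht2 : t < s := by
      have := hx1; rw [hrm] at this; simp only [htdef]; linarith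
    have hst : 0 < s + t := by linarith
    have hst' : 0 < s - t := by linarith
    have hppos : 0 < (rp - x) * (x - rm) := by
      rw [hrpx, hxrm]; positivity
    have hupos : 0 < (rp - x) / (rp - rm) := by
      apply div_pos; · rw [hrpx]; linarith
      · rw [hd]; positivity
    have hult : (rp - x) / (rp - rm) < 1 := by
      rw [div_lt_one (by rw [hd]; positivity)]
      rw [hrpx, hd]; linarith
    have hne1 : (rp - x) / (rp - rm) ≠ -1 := by linarith
    have hne2 : (rp - x) / (rp - rm) ≠ 1 := ne_of_lt hult
    set A := Real.sqrt (1 - ((rp - x) / (rp - rm)) ^ 2) with hAdef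
    set B := Real.sqrt ((rp - x) * (x - rm)) with hBdef
    have h1u2 : 0 < 1 - ((rp - x) / (rp - rm)) ^ 2 := by
      have : ((rp - x) / (rp - rm)) ^ 2 < 1 := by
        rw [sq_lt_one_iff_abs_lt_one, abs_lt]
        constructor <;> linarith
      linarith
    have hApos : 0 < A := Real.sqrt_pos.2 h1u2
    have hBpos : 0 < B := Real.sqrt_pos.2 hppos
    have hA2 : A ^ 2 = (s - t) * (3 * s + t) / (4 * s ^ 2) := by
      rw [hAdef, Real.sq_sqrt h1u2.le, hrpx, hd]
      field_simp
      ring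
    have hB2 : B ^ 2 = (s + t) * (s - t) := by
      rw [hBdef, Real.sq_sqrt hppos.le, hrpx, hxrm]
    have key : t * (s * A) < m * B :=
      rn_key_ineq m s t A B hm hs0 hsm ht1 ht2 hApos hBpos hA2 hB2
    -- build derivative
    have hu' : HasDerivAt (fun r : ℝ => (rp - r) / (rp - rm)) (-1 / (rp - rm)) x := by
      have h1 : HasDerivAt (fun r : ℝ => rp - r) (-1) x := by
        simpa using (hasDerivAt_id x).const_sub rp
      exact h1.div_const (rp - rm)
    have harccos : HasDerivAt (fun r : ℝ => Real.arccos ((rp - r) / (rp - rm)))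
        (-(1 / A) * (-1 / (rp - rm))) x := by
      exact HasDerivAt.comp (h₂ := Real.arccos) x (Real.hasDerivAt_arccos hne1 hne2) hu'
    have hq : HasDerivAt (fun r : ℝ => (rp - r) * (r - rm))
        ((-1) * (x - rm) + (rp - x) * 1) x := by
      have h1 : HasDerivAt (fun r : ℝ => rp - r) (-1) x := by
        simpa using (hasDerivAt_id x).const_sub rp
      have h2 : HasDerivAt (fun r : ℝ => r - rm) 1 x := by
        simpa using (hasDerivAt_id x).sub_const rm
      exact h1.mul h2
    have hsq : HasDerivAt (fun r : ℝ => Real.sqrt ((rp - r) * (r - rm)))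
        (1 / (2 * B) * ((-1) * (x - rm) + (rp - x) * 1)) x := by
      exact (Real.hasDerivAt_sqrt (ne_of_gt hppos)).comp x hq
    have hFd : HasDerivAt F
        (2 * m * (-(1 / A) * (-1 / (rp - rm)))
          - 1 / (2 * B) * ((-1) * (x - rm) + (rp - x) * 1)) x := by
      rw [hFeq]
      exact (harccos.const_mul (2 * m)).sub hsq
    rw [hFd.deriv]
    have e1 : 2 * m * (-(1 / A) * (-1 / (rp - rm))) = m / (s * A) := by
      rw [hd]
      field_simp
    have e2 : 1 / (2 * B) * ((-1) * (x - rm) + (rp - x) * 1) = t / B := by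
      rw [hxrm, hrpx]
      field_simp
      ring
    rw [e1, e2, sub_pos, div_lt_div_iff₀ hBpos (by positivity)]
    exact key
  refine ⟨hcont, hmono, ?_, ?_⟩
  · -- BijOn on Icc
    refine ⟨?_, hmono.injOn, ?_⟩
    · intro x hx
      constructor
      · rw [← Frm]
        exact hmono.monotoneOn (Set.left_mem_Icc.2 hlt.le) hx hx.1
      · rw [← Frp]
        exact hmono.monotoneOn hx (Set.right_mem_Icc.2 hlt.le) hx.2
    · have := intermediate_value_Icc hlt.le hcont
      rw [Frm, Frp] at this
      exact this
  · -- BijOn on Ioo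
    have hsurj : Set.SurjOn F (Set.Icc rm rp) (Set.Icc 0 (m * Real.pi)) := by
      have := intermediate_value_Icc hlt.le hcont
      rw [Frm, Frp] at this
      exact this
    refine ⟨?_, hmono.injOn.mono Set.Ioo_subset_Icc_self, ?_⟩
    · intro x hx
      constructor
      · rw [← Frm]
        exact hmono (Set.left_mem_Icc.2 hlt.le) (Set.Ioo_subset_Icc_self hx) hx.1
      · rw [← Frp]
        exact hmono (Set.Ioo_subset_Icc_self hx) (Set.right_mem_Icc.2 hlt.le) hx.2
    · intro y hy
      obtain ⟨x, hx, hxy⟩ := hsurj (Set.Ioo_subset_Icc_self hy)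
      refine ⟨x, ⟨?_, ?_⟩, hxy⟩
      · rcases eq_or_lt_of_le hx.1 with h | h
        · exfalso; rw [← h, Frm] at hxy; linarith [hy.1]
        · exact h
      · rcases eq_or_lt_of_le hx.2 with h | h
        · exfalso; rw [h, Frp] at hxy; linarith [hy.2]
        · exact h
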